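/- For every quaternion P = (p₀, p) ∈ ℝ × ℝ³ with P ≠ 0 and every vector q ∈ ℝ³, the matrix identity A(P)ᵀ · p̃ · q̃ = −p̃ · q̃ − p₀ (A(P)ᵀ − I) · q̃ holds, where I is the 3×3 identity matrix. -/

import Mathlib

open Matrix

/-- The skew-symmetric matrix `p̃` of `p ∈ ℝ³`, satisfying `p̃ v = p × v`. -/
def skew (p : Fin 3 → ℝ) : Matrix (Fin 3) (Fin 3) ℝ :=
  !![0, -p 2, p 1; p 2, 0, -p 0; -p 1, p 0, 0]

/-- The rotation matrix `A(P) = I + (2/‖P‖²)(p₀ p̃ + p̃²)` associated with a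
(not necessarily unit) quaternion `P = (p₀, p)`, where `‖P‖² = p₀² + ‖p‖²`. -/
noncomputable def quatA (p0 : ℝ) (p : Fin 3 → ℝ) : Matrix (Fin 3) (Fin 3) ℝ :=
  1 + (2 / (p0 ^ 2 + p ⬝ᵥ p)) • (p0 • skew p + skew p * skew p)

lemma skew_transpose (p : Fin 3 → ℝ) : (skew p)ᵀ = -skew p := by
  ext i j; fin_cases i <;> fin_cases j <;> simp [skew]

lemma skew_cube (p : Fin 3 → ℝ) :
    skew p * (skew p * skew p) = (-(p ⬝ᵥ p)) • skew p := by
  ext i j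
  fin_cases i <;> fin_cases j <;>
    simp [skew, Matrix.mul_apply, Fin.sum_univ_three, dotProduct] <;> ring

/-- For every nonzero quaternion `P = (p₀, p)` and every `q ∈ ℝ³`:
`A(P)ᵀ p̃ q̃ = −p̃ q̃ − p₀ (A(P)ᵀ − I) q̃`. -/
theorem quatA_transpose_mul_skew_mul_skew' (p0 : ℝ) (p : Fin 3 → ℝ) (hP : (p0, p) ≠ 0)
    (q : Fin 3 → ℝ) :
    (quatA p0 p)ᵀ * skew p * skew q =
      -(skew p * skew q) - p0 • (((quatA p0 p)ᵀ - 1) * skew q) := by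
  have h1 : 0 ≤ p ⬝ᵥ p := by
    simp only [dotProduct, Fin.sum_univ_three]
    nlinarith [sq_nonneg (p 0), sq_nonneg (p 1), sq_nonneg (p 2)]
  have hn : p0 ^ 2 + p ⬝ᵥ p ≠ 0 := by
    intro h
    have hd : p ⬝ᵥ p = 0 := by nlinarith [sq_nonneg p0]
    have hd' : p 0 * p 0 + p 1 * p 1 + p 2 * p 2 = 0 := by
      simpa [dotProduct, Fin.sum_univ_three] using hd
    have h0 : p 0 = 0 := by nlinarith [sq_nonneg (p 1), sq_nonneg (p 2)]
    have h1' : p 1 = 0 := by nlinarith [sq_nonneg (p 0), sq_nonneg (p 2)]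
    have h2 : p 2 = 0 := by nlinarith [sq_nonneg (p 0), sq_nonneg (p 1)]
    have hp0 : p0 = 0 := by nlinarith
    apply hP
    refine Prod.ext hp0 (funext fun i => ?_)
    fin_cases i
    · exact h0
    · exact h1'
    · exact h2
  have hAT : (quatA p0 p)ᵀ =
      1 + (2 / (p0 ^ 2 + p ⬝ᵥ p)) • ((-p0) • skew p + skew p * skew p) := by
    simp [quatA, transpose_add, transpose_smul, smul_add, transpose_mul,
      skew_transpose, Matrix.neg_mul, Matrix.mul_neg]
  rw [hAT]
  set S := skew p
  set Q := skew q
  set n := p0 ^ 2 + p ⬝ᵥ p with hn'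
  have hc := skew_cube p
  simp only [add_sub_cancel_left, add_mul, one_mul, smul_mul_assoc, mul_assoc,
    neg_smul, neg_mul, neg_add_rev, smul_add, Matrix.smul_mul, Matrix.mul_smul] at *
  have hc3 : S * (S * (S * Q)) = -((p ⬝ᵥ p) • (S * Q)) := by
    rw [show S * (S * (S * Q)) = (S * (S * S)) * Q by simp only [Matrix.mul_assoc], hc]
    simp [Matrix.smul_mul]
    rfl
  rw [hc3]
  match_scalars <;> field_simp
  · have hnv : n = p0 ^ 2 + p ⬝ᵥ p := rfl
    rw [hnv]
    simp only [dotProduct, Fin.sum_univ_three]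
    ring
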